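/- arXiv:1305.4401 — 7 statements merged into one kernel-verified Lean document; each statement's English description precedes it below -/
import Mathlib

section
/- Let G be a group, f an endomorphism of G, and a ∈ G a fixed element. The binary operation x * y = f(x)⁻¹ · a · f(y) · x satisfies the left self-distributivity law for all x, y, z ∈ G if and only if a commutes with f(f(x)) for all x ∈ G and a satisfies the braid relation a·f(a)·a = f(a)·a·f(a). -/
/-! Writing `b = f a` and `c x = f (f x) * a * (f (f x))⁻¹`, both sides of the law
`x * (y * z) = (x * y) * (x * z)` share the outer factors `(f x)⁻¹ (f (f y))⁻¹ b⁻¹` and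
`f (f z) * f y * x`; cancelling them leaves `b * c y * b = c x * b * c z`. Since `c 1 = a`,
this identity for all `x, y, z` says exactly that `c` is constantly `a` and that
`b * a * b = a * b * a`. -/

theorem forall_mul_mul_eq_iff_eq_and_braid {M ι : Type*} [CancelMonoid M] {c : ι → M}
    {a b : M} (i₀ : ι) (hc : c i₀ = a) :
    (∀ i j k, b * c j * b = c i * b * c k) ↔ (∀ i, c i = a) ∧ a * b * a = b * a * b := by
  constructor
  · intro h
    have braid : b * a * b = a * b * a := by simpa only [hc] using h i₀ i₀ i₀
    refine ⟨fun i => ?_, braid.symm⟩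
    have hi : b * c i * b = b * a * b := by simpa only [hc, braid] using h i₀ i i₀
    exact mul_left_cancel (mul_right_cancel hi)
  · rintro ⟨hconst, braid⟩ i j k
    simp only [hconst, braid]

section TwistedOp

variable {G : Type*} [Group G]

def twistedOp (f : G →* G) (a x y : G) : G := (f x)⁻¹ * a * f y * x

theorem twistedOp_left_distrib_iff (f : G →* G) (a x y z : G) :
    twistedOp f a x (twistedOp f a y z) =
        twistedOp f a (twistedOp f a x y) (twistedOp f a x z) ↔
      f a * (f (f y) * a * (f (f y))⁻¹) * f a =
        (f (f x) * a * (f (f x))⁻¹) * f a * (f (f z) * a * (f (f z))⁻¹) := by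
  set P := (f x)⁻¹ * (f (f y))⁻¹ * (f a)⁻¹
  set Q := f (f z) * f y * x
  have hlhs : twistedOp f a x (twistedOp f a y z) =
      P * (f a * (f (f y) * a * (f (f y))⁻¹) * f a) * Q := by
    simp only [P, Q, twistedOp, map_mul, map_inv]
    group
  have hrhs : twistedOp f a (twistedOp f a x y) (twistedOp f a x z) =
      P * ((f (f x) * a * (f (f x))⁻¹) * f a * (f (f z) * a * (f (f z))⁻¹)) * Q := by
    simp only [P, Q, twistedOp, map_mul, map_inv]
    group
  rw [hlhs, hrhs, mul_right_cancel_iff, mul_left_cancel_iff]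

end TwistedOp

theorem stmt4 (G : Type*) [Group G] (f : G →* G) (a : G) :
    (∀ x y z : G,
      (fun x y : G => (f x)⁻¹ * a * f y * x) x ((fun x y : G => (f x)⁻¹ * a * f y * x) y z) =
      (fun x y : G => (f x)⁻¹ * a * f y * x) ((fun x y : G => (f x)⁻¹ * a * f y * x) x y)
        ((fun x y : G => (f x)⁻¹ * a * f y * x) x z)) ↔
    ((∀ x : G, a * f (f x) = f (f x) * a) ∧ a * f a * a = f a * a * f a) := by
  change (∀ x y z, twistedOp f a x (twistedOp f a y z) =
    twistedOp f a (twistedOp f a x y) (twistedOp f a x z)) ↔ _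
  have hconj : ∀ x, f (f x) * a * (f (f x))⁻¹ = a ↔ a * f (f x) = f (f x) * a := fun x => by
    rw [mul_inv_eq_iff_eq_mul, eq_comm]
  simp only [twistedOp_left_distrib_iff, ← hconj]
  exact forall_mul_mul_eq_iff_eq_and_braid (b := f a)
    (c := fun x => f (f x) * a * (f (f x))⁻¹) 1 (by simp)
end

section
/- Let G be a group, f an endomorphism of G, and a ∈ G with a·f(a)·a = f(a)·a·f(a) and a commuting with the image of f∘f. Suppose also that the operation x * y = f(x)⁻¹·a·f(y)·x yields an LD-system (which follows from the stated hypotheses). Then the elements aₙ := fⁿ(a) (n ≥ 0) satisfy the braid relations: aᵢ·aⱼ = aⱼ·aᵢ whenever |i − j| ≥ 2, and aᵢ·aⱼ·aᵢ = aⱼ·aᵢ·aⱼ whenever |i − j| = 1. -/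
section IterateMulHom

variable {M F : Type*} [Mul M] [FunLike F M M] [MulHomClass F M M] (f : F) {a : M}

theorem Commute.iterate_map {x y : M} (h : Commute x y) (n : ℕ) :
    Commute (f^[n] x) (f^[n] y) := by
  simpa only [Commute, SemiconjBy, iterate_map_mul] using congrArg f^[n] h.eq

theorem commute_iterate_iterate_add_two (hcomm : ∀ x, Commute a (f (f x))) (i k : ℕ) :
    Commute (f^[i] a) (f^[i + 2 + k] a) := by
  rw [Nat.add_assoc, Function.iterate_add_apply, Function.iterate_add_apply]
  exact (hcomm _).iterate_map f i

theorem iterate_braid_iterate_succ (hbraid : a * f a * a = f a * a * f a) (i : ℕ) :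
    f^[i] a * f^[i + 1] a * f^[i] a = f^[i + 1] a * f^[i] a * f^[i + 1] a := by
  simpa only [iterate_map_mul, ← Function.iterate_succ_apply] using congrArg f^[i] hbraid

end IterateMulHom

theorem stmt6_general (G : Type*) [Group G] (f : G →* G) (a : G)
    (hbraid : a * f a * a = f a * a * f a)
    (hcomm : ∀ x : G, a * f (f x) = f (f x) * a) :
    (∀ i j : ℕ, (i + 2 ≤ j ∨ j + 2 ≤ i) →
      (f^[i]) a * (f^[j]) a = (f^[j]) a * (f^[i]) a) ∧
    (∀ i j : ℕ, (j = i + 1 ∨ i = j + 1) →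
      (f^[i]) a * (f^[j]) a * (f^[i]) a = (f^[j]) a * (f^[i]) a * (f^[j]) a) := by
  refine ⟨fun i j hij => ?_, fun i j hij => ?_⟩
  · rcases hij with hij | hij
    · obtain ⟨k, rfl⟩ := Nat.exists_eq_add_of_le hij
      exact (commute_iterate_iterate_add_two f hcomm i k).eq
    · obtain ⟨k, rfl⟩ := Nat.exists_eq_add_of_le hij
      exact (commute_iterate_iterate_add_two f hcomm j k).eq.symm
  · rcases hij with rfl | rfl
    · exact iterate_braid_iterate_succ f hbraid i
    · exact (iterate_braid_iterate_succ f hbraid j).symm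

theorem stmt6 (G : Type*) [Group G] (f : G →* G) (a : G)
    (hbraid : a * f a * a = f a * a * f a)
    (hcomm : ∀ x : G, a * f (f x) = f (f x) * a)
    (hLD : ∀ x y z : G,
      (fun x y : G => (f x)⁻¹ * a * f y * x) x ((fun x y : G => (f x)⁻¹ * a * f y * x) y z) =
      (fun x y : G => (f x)⁻¹ * a * f y * x) ((fun x y : G => (f x)⁻¹ * a * f y * x) x y)
        ((fun x y : G => (f x)⁻¹ * a * f y * x) x z)) :
    (∀ i j : ℕ, (i + 2 ≤ j ∨ j + 2 ≤ i) →
      (f^[i]) a * (f^[j]) a = (f^[j]) a * (f^[i]) a) ∧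
    (∀ i j : ℕ, (j = i + 1 ∨ i = j + 1) →
      (f^[i]) a * (f^[j]) a * (f^[i]) a = (f^[j]) a * (f^[i]) a * (f^[j]) a) :=
  stmt6_general G f a hbraid hcomm
end

section
/- The infinite braid group B_∞ equipped with the two operations x * y = ∂(x)⁻¹ · σ₁ · ∂(y) · x and x *̄ y = ∂(x)⁻¹ · σ₁⁻¹ · ∂(y) · x is a bi-LD-system: each of the four mixed distributivity laws x ∘₁ (y ∘₂ z) = (x ∘₁ y) ∘₂ (x ∘₁ z) holds for ∘₁, ∘₂ ∈ {*, *̄}. -/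
/-- Relations of the infinite braid group: index `i : ℕ` stands for the generator `σ_{i+1}`. -/
def braidRels : Set (FreeGroup ℕ) :=
  {r | (∃ i j : ℕ, i + 2 ≤ j ∧
          r = FreeGroup.of i * FreeGroup.of j * (FreeGroup.of i)⁻¹ * (FreeGroup.of j)⁻¹) ∨
       (∃ i : ℕ,
          r = FreeGroup.of i * FreeGroup.of (i + 1) * FreeGroup.of i *
              (FreeGroup.of (i + 1) * FreeGroup.of i * FreeGroup.of (i + 1))⁻¹)}

/-- The braid group on infinitely many strands. -/
abbrev BInf : Type := PresentedGroup braidRels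

/-- The generator `σ_{i+1}` of `BInf`. -/
def sigma (i : ℕ) : BInf := PresentedGroup.of i

/-! Both operations are shifted conjugations `x ∘ₐ y = ∂(x)⁻¹ a ∂(y) x`, with `a = σ₁` and
`a = σ₁⁻¹`. A direct computation in an arbitrary group shows that `∘ₐ` distributes over `∘_b`
as soon as `a` and `b` commute with the image of `∂²` and `∂a · a · ∂b = b · ∂a · a`. For
`a, b ∈ {σ₁, σ₁⁻¹}` the first condition holds because `σ₁` commutes with `σᵢ` for `i ≥ 3`, and
the second is a signed form of the braid relation `σ₁σ₂σ₁ = σ₂σ₁σ₂`. -/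

def shiftConj {G : Type*} [Group G] (d : G →* G) (a x y : G) : G := (d x)⁻¹ * a * d y * x

theorem shiftConj_left_distrib {G : Type*} [Group G] (d : G →* G) {a b : G}
    (ha : ∀ w, Commute a (d (d w))) (hb : ∀ w, Commute b (d (d w)))
    (hab : d a * a * d b = b * d a * a) (x y z : G) :
    shiftConj d a x (shiftConj d b y z) =
      shiftConj d b (shiftConj d a x y) (shiftConj d a x z) := by
  have hbx : d (d x) * b * (d (d x))⁻¹ = b := (hb x).symm.mul_inv_cancel
  have hay : (d (d y))⁻¹ * a = a * (d (d y))⁻¹ := ((ha y).inv_right).eq.symm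
  simp only [shiftConj, map_mul, map_inv]
  calc (d x)⁻¹ * a * ((d (d y))⁻¹ * d b * d (d z) * d y) * x
      = (d x)⁻¹ * (a * (d (d y))⁻¹) * d b * d (d z) * d y * x := by group
    _ = (d x)⁻¹ * (d (d y))⁻¹ * (d a)⁻¹ * (d a * a * d b) * d (d z) * d y * x := by
        rw [← hay]; group
    _ = (d x)⁻¹ * (d (d y))⁻¹ * (d a)⁻¹ * b * d a * (a * d (d z)) * d y * x := by
        rw [hab]; group
    _ = (d x)⁻¹ * (d (d y))⁻¹ * (d a)⁻¹ * (d (d x) * b * (d (d x))⁻¹) * d a * d (d z) * a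
          * d y * x := by
        rw [(ha z).eq, hbx]; group
    _ = ((d (d x))⁻¹ * d a * d (d y) * d x)⁻¹ * b * ((d (d x))⁻¹ * d a * d (d z) * d x) *
          ((d x)⁻¹ * a * d y * x) := by group

theorem braid_zpow_units {G : Type*} [Group G] {x y : G} (h : x * y * x = y * x * y)
    (e f : ℤˣ) :
    y ^ (e : ℤ) * x ^ (e : ℤ) * y ^ (f : ℤ) = x ^ (f : ℤ) * y ^ (e : ℤ) * x ^ (e : ℤ) := by
  rcases Int.units_eq_one_or e with rfl | rfl <;> rcases Int.units_eq_one_or f with rfl | rfl <;>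
    simp only [Units.val_one, Units.val_neg, zpow_one, zpow_neg]
  · exact h.symm
  · calc y * x * y⁻¹ = x⁻¹ * (x * y * x) * y⁻¹ := by group
      _ = x⁻¹ * y * x := by rw [h]; group
  · calc y⁻¹ * x⁻¹ * y = y⁻¹ * x⁻¹ * (y * x * y) * y⁻¹ * x⁻¹ := by group
      _ = x * y⁻¹ * x⁻¹ := by rw [← h]; group
  · calc y⁻¹ * x⁻¹ * y⁻¹ = (y * x * y)⁻¹ := by group
      _ = x⁻¹ * y⁻¹ * x⁻¹ := by rw [← h]; group

theorem sigma_commute {i j : ℕ} (h : i + 2 ≤ j) : Commute (sigma i) (sigma j) :=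
  mul_inv_eq_iff_eq_mul.mp <| PresentedGroup.mk_eq_mk_of_mul_inv_mem
    (x := FreeGroup.of i * FreeGroup.of j * (FreeGroup.of i)⁻¹) (Or.inl ⟨i, j, h, rfl⟩)

theorem sigma_braid (i : ℕ) :
    sigma i * sigma (i + 1) * sigma i = sigma (i + 1) * sigma i * sigma (i + 1) :=
  PresentedGroup.mk_eq_mk_of_mul_inv_mem
    (x := FreeGroup.of i * FreeGroup.of (i + 1) * FreeGroup.of i)
    (y := FreeGroup.of (i + 1) * FreeGroup.of i * FreeGroup.of (i + 1)) (Or.inr ⟨i, rfl⟩)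

theorem commute_sigma_zero_shift_shift (D : BInf →* BInf)
    (hD : ∀ i : ℕ, D (sigma i) = sigma (i + 1)) (w : BInf) : Commute (sigma 0) (D (D w)) := by
  have hconj : (MulAut.conj (sigma 0)).toMonoidHom.comp (D.comp D) = D.comp D :=
    PresentedGroup.ext fun j => by
      change sigma 0 * D (D (sigma j)) * (sigma 0)⁻¹ = D (D (sigma j))
      rw [hD, hD]
      exact (sigma_commute (by omega)).mul_inv_cancel
  exact mul_inv_eq_iff_eq_mul.mp (DFunLike.congr_fun hconj w)

theorem shiftConj_sigma_zpow_left_distrib (D : BInf →* BInf)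
    (hD : ∀ i : ℕ, D (sigma i) = sigma (i + 1)) (e f : ℤˣ) (x y z : BInf) :
    shiftConj D (sigma 0 ^ (e : ℤ)) x (shiftConj D (sigma 0 ^ (f : ℤ)) y z) =
      shiftConj D (sigma 0 ^ (f : ℤ)) (shiftConj D (sigma 0 ^ (e : ℤ)) x y)
        (shiftConj D (sigma 0 ^ (e : ℤ)) x z) := by
  have hcomm (n : ℤ) (w : BInf) : Commute (sigma 0 ^ n) (D (D w)) :=
    (commute_sigma_zero_shift_shift D hD w).zpow_left n
  refine shiftConj_left_distrib D (hcomm e) (hcomm f) ?_ x y z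
  simp only [map_zpow, hD]
  exact braid_zpow_units (sigma_braid 0) e f

theorem stmt7 (D : BInf →* BInf) (hD : ∀ i : ℕ, D (sigma i) = sigma (i + 1)) :
    (∀ x y z : BInf,
      (fun x y : BInf => (D x)⁻¹ * sigma 0 * D y * x) x
        ((fun x y : BInf => (D x)⁻¹ * sigma 0 * D y * x) y z) =
      (fun x y : BInf => (D x)⁻¹ * sigma 0 * D y * x)
        ((fun x y : BInf => (D x)⁻¹ * sigma 0 * D y * x) x y)
        ((fun x y : BInf => (D x)⁻¹ * sigma 0 * D y * x) x z)) ∧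
    (∀ x y z : BInf,
      (fun x y : BInf => (D x)⁻¹ * sigma 0 * D y * x) x
        ((fun x y : BInf => (D x)⁻¹ * (sigma 0)⁻¹ * D y * x) y z) =
      (fun x y : BInf => (D x)⁻¹ * (sigma 0)⁻¹ * D y * x)
        ((fun x y : BInf => (D x)⁻¹ * sigma 0 * D y * x) x y)
        ((fun x y : BInf => (D x)⁻¹ * sigma 0 * D y * x) x z)) ∧
    (∀ x y z : BInf,
      (fun x y : BInf => (D x)⁻¹ * (sigma 0)⁻¹ * D y * x) x
        ((fun x y : BInf => (D x)⁻¹ * sigma 0 * D y * x) y z) =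
      (fun x y : BInf => (D x)⁻¹ * sigma 0 * D y * x)
        ((fun x y : BInf => (D x)⁻¹ * (sigma 0)⁻¹ * D y * x) x y)
        ((fun x y : BInf => (D x)⁻¹ * (sigma 0)⁻¹ * D y * x) x z)) ∧
    (∀ x y z : BInf,
      (fun x y : BInf => (D x)⁻¹ * (sigma 0)⁻¹ * D y * x) x
        ((fun x y : BInf => (D x)⁻¹ * (sigma 0)⁻¹ * D y * x) y z) =
      (fun x y : BInf => (D x)⁻¹ * (sigma 0)⁻¹ * D y * x)
        ((fun x y : BInf => (D x)⁻¹ * (sigma 0)⁻¹ * D y * x) x y)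
        ((fun x y : BInf => (D x)⁻¹ * (sigma 0)⁻¹ * D y * x) x z)) := by
  have law := shiftConj_sigma_zpow_left_distrib D hD
  have hpos : sigma 0 ^ ((1 : ℤˣ) : ℤ) = sigma 0 := by simp
  have hneg : sigma 0 ^ ((-1 : ℤˣ) : ℤ) = (sigma 0)⁻¹ := by simp
  exact ⟨by simpa only [shiftConj, hpos] using law 1 1, by simpa only [shiftConj, hpos, hneg] using law 1 (-1),
    by simpa only [shiftConj, hpos, hneg] using law (-1) 1, by simpa only [shiftConj, hneg] using law (-1) (-1)⟩
end

section
/- In the braid group B_∞, the element τ_{p,p} = δ_{p+1}·∂(δ_{p+1})·...·∂^{p−1}(δ_{p+1}), where δ_{p+1} = σ_p σ_{p−1} ⋯ σ₁, satisfies the braid relation τ_{p,p} · ∂^p(τ_{p,p}) · τ_{p,p} = ∂^p(τ_{p,p}) · τ_{p,p} · ∂^p(τ_{p,p}). -/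
/-- `δ_{p+1} = σ_p σ_{p-1} ⋯ σ_1`. -/
def delta (p : ℕ) : BInf := ((List.range p).reverse.map sigma).prod

/-- `τ_{p,q} = δ_{p+1} · ∂(δ_{p+1}) ⋯ ∂^{q-1}(δ_{p+1})`, for a shift endomorphism `D`. -/
def tau (D : BInf →* BInf) (p q : ℕ) : BInf :=
  ((List.range q).map (fun k => (⇑D)^[k] (delta p))).prod

namespace BInf

theorem sigma_mul_sigma_comm {i j : ℕ} (h : i + 2 ≤ j) :
    sigma i * sigma j = sigma j * sigma i :=
  PresentedGroup.mk_eq_mk_of_mul_inv_mem (Or.inl ⟨i, j, h, by group⟩)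

theorem sigma_braid (i : ℕ) :
    sigma i * sigma (i + 1) * sigma i = sigma (i + 1) * sigma i * sigma (i + 1) :=
  PresentedGroup.mk_eq_mk_of_mul_inv_mem (Or.inr ⟨i, rfl⟩)

/-- `∂^s(δ_{n+1}) = σ_{s+n} ⋯ σ_{s+1}`, with the 0-based indices of `sigma`. -/
def deltaFrom (s n : ℕ) : BInf := ((List.range n).reverse.map fun i => sigma (s + i)).prod

/-- `∂^s(τ_{n,q})`. -/
def tauFrom (s n q : ℕ) : BInf := ((List.range q).map fun k => deltaFrom (s + k) n).prod

@[simp] theorem deltaFrom_zero (s : ℕ) : deltaFrom s 0 = 1 := rfl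

theorem deltaFrom_succ (s n : ℕ) : deltaFrom s (n + 1) = sigma (s + n) * deltaFrom s n := by
  simp [deltaFrom, List.range_succ]

@[simp] theorem tauFrom_zero (s n : ℕ) : tauFrom s n 0 = 1 := rfl

theorem tauFrom_succ (s n q : ℕ) :
    tauFrom s n (q + 1) = tauFrom s n q * deltaFrom (s + q) n := by
  simp [tauFrom, List.range_succ]

theorem deltaFrom_add (s m n : ℕ) :
    deltaFrom s (m + n) = deltaFrom (s + m) n * deltaFrom s m := by
  induction n with
  | zero => simp
  | succ n ih => rw [← add_assoc, deltaFrom_succ, ih, deltaFrom_succ, mul_assoc, add_assoc]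

section Commutation

theorem sigma_mul_deltaFrom_comm {s n j : ℕ} (h : s + n + 1 ≤ j) :
    sigma j * deltaFrom s n = deltaFrom s n * sigma j := by
  induction n with
  | zero => simp
  | succ n ih =>
    rw [deltaFrom_succ, ← mul_assoc, ← sigma_mul_sigma_comm (by omega), mul_assoc,
      ih (by omega), ← mul_assoc]

theorem deltaFrom_mul_deltaFrom_comm {a m b n : ℕ} (h : a + m + 1 ≤ b) :
    deltaFrom a m * deltaFrom b n = deltaFrom b n * deltaFrom a m := by
  induction n with
  | zero => simp
  | succ n ih =>
    rw [deltaFrom_succ, mul_assoc, ← ih, ← mul_assoc, ← sigma_mul_deltaFrom_comm (by omega),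
      mul_assoc]

theorem tauFrom_mul_deltaFrom_comm {s n q a m : ℕ} (h : s + q + n ≤ a) :
    tauFrom s n q * deltaFrom a m = deltaFrom a m * tauFrom s n q := by
  induction q with
  | zero => simp
  | succ q ih =>
    rw [tauFrom_succ, mul_assoc, deltaFrom_mul_deltaFrom_comm (by omega), ← mul_assoc,
      ih (by omega), mul_assoc]

theorem tauFrom_add (s m n q : ℕ) :
    tauFrom s (m + n) q = tauFrom (s + m) n q * tauFrom s m q := by
  induction q with
  | zero => simp
  | succ q ih =>
    have hc := tauFrom_mul_deltaFrom_comm (s := s) (n := m) (q := q) (a := s + q + m) (m := n)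
      le_rfl
    rw [tauFrom_succ, ih, deltaFrom_add, tauFrom_succ, tauFrom_succ, add_right_comm s m q,
      mul_assoc, ← mul_assoc (tauFrom s m q), hc]
    group

end Commutation

section Conjugation

theorem sigma_mul_deltaFrom {s i n : ℕ} (h : i + 2 ≤ n) :
    sigma (s + i) * deltaFrom s n = deltaFrom s n * sigma (s + i + 1) := by
  induction n, h using Nat.le_induction with
  | base =>
    have hc : sigma (s + i + 1) * deltaFrom s i = deltaFrom s i * sigma (s + i + 1) :=
      sigma_mul_deltaFrom_comm (by omega)
    simp only [deltaFrom_succ, ← add_assoc]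
    calc sigma (s + i) * (sigma (s + i + 1) * (sigma (s + i) * deltaFrom s i))
        = sigma (s + i) * sigma (s + i + 1) * sigma (s + i) * deltaFrom s i := by group
      _ = sigma (s + i + 1) * sigma (s + i) * (sigma (s + i + 1) * deltaFrom s i) := by
        rw [sigma_braid]; group
      _ = sigma (s + i + 1) * (sigma (s + i) * deltaFrom s i) * sigma (s + i + 1) := by
        rw [hc]; group
  | succ n hn ih =>
    rw [deltaFrom_succ, ← mul_assoc, sigma_mul_sigma_comm (by omega), mul_assoc, ih,
      ← mul_assoc]

theorem sigma_mul_tauFrom {s i n q : ℕ} (h : i + 2 ≤ n) :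
    sigma (s + i) * tauFrom s n q = tauFrom s n q * sigma (s + i + q) := by
  induction q with
  | zero => simp
  | succ q ih =>
    rw [tauFrom_succ, ← mul_assoc, ih, mul_assoc, add_right_comm s i q,
      sigma_mul_deltaFrom h, ← mul_assoc, add_right_comm s q i, add_assoc _ q 1]

theorem deltaFrom_mul_tauFrom {s t m n q : ℕ} (hst : s ≤ t) (h : t + m + 1 ≤ s + n) :
    deltaFrom t m * tauFrom s n q = tauFrom s n q * deltaFrom (t + q) m := by
  induction m with
  | zero => simp
  | succ m ih =>
    obtain ⟨i, rfl⟩ := Nat.exists_eq_add_of_le hst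
    rw [deltaFrom_succ, mul_assoc, ih (by omega), ← mul_assoc, add_assoc s i m,
      sigma_mul_tauFrom (by omega), mul_assoc, deltaFrom_succ, ← add_assoc,
      add_right_comm _ m q]

theorem tauFrom_mul_tauFrom {s t m r n q : ℕ} (hst : s ≤ t) (h : t + r + m ≤ s + n) :
    tauFrom t m r * tauFrom s n q = tauFrom s n q * tauFrom (t + q) m r := by
  induction r with
  | zero => simp
  | succ r ih =>
    rw [tauFrom_succ, mul_assoc, deltaFrom_mul_tauFrom (by omega) (by omega), ← mul_assoc,
      ih (by omega), mul_assoc, tauFrom_succ, add_right_comm t r q]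

end Conjugation

section Shift

variable {D : BInf →* BInf}

theorem iterate_sigma (hD : ∀ i : ℕ, D (sigma i) = sigma (i + 1)) (k i : ℕ) :
    (⇑D)^[k] (sigma i) = sigma (i + k) := by
  induction k generalizing i with
  | zero => rfl
  | succ k ih => rw [Function.iterate_succ_apply, hD, ih, add_right_comm, add_assoc]

theorem iterate_deltaFrom (hD : ∀ i : ℕ, D (sigma i) = sigma (i + 1)) (k s n : ℕ) :
    (⇑D)^[k] (deltaFrom s n) = deltaFrom (s + k) n := by
  induction n with
  | zero => simp
  | succ n ih =>
    rw [deltaFrom_succ, deltaFrom_succ, iterate_map_mul, iterate_sigma hD, ih, add_right_comm]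

theorem iterate_tauFrom (hD : ∀ i : ℕ, D (sigma i) = sigma (i + 1)) (k s n q : ℕ) :
    (⇑D)^[k] (tauFrom s n q) = tauFrom (s + k) n q := by
  induction q with
  | zero => simp
  | succ q ih =>
    rw [tauFrom_succ, tauFrom_succ, iterate_map_mul, ih, iterate_deltaFrom hD, add_right_comm]

theorem tau_eq_tauFrom (hD : ∀ i : ℕ, D (sigma i) = sigma (i + 1)) (n q : ℕ) :
    tau D n q = tauFrom 0 n q := by
  have hdelta : delta n = deltaFrom 0 n := by simp [delta, deltaFrom]
  simp only [tau, tauFrom, hdelta, iterate_deltaFrom hD, zero_add]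

end Shift

end BInf

open BInf in
theorem stmt8_general (D : BInf →* BInf) (hD : ∀ i : ℕ, D (sigma i) = sigma (i + 1))
    (p : ℕ) :
    tau D p p * (⇑D)^[p] (tau D p p) * tau D p p =
      (⇑D)^[p] (tau D p p) * tau D p p * (⇑D)^[p] (tau D p p) := by
  rw [tau_eq_tauFrom hD, iterate_tauFrom hD, zero_add]
  have hprod : tauFrom p p p * tauFrom 0 p p = tauFrom 0 (p + p) p := by
    rw [tauFrom_add, zero_add]
  have hpush : tauFrom 0 p p * tauFrom 0 (p + p) p = tauFrom 0 (p + p) p * tauFrom p p p := by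
    simpa using tauFrom_mul_tauFrom (s := 0) (t := 0) (m := p) (r := p) (n := p + p) (q := p)
      le_rfl (by omega)
  rw [mul_assoc, hprod, hpush, ← hprod]

theorem stmt8 (D : BInf →* BInf) (hD : ∀ i : ℕ, D (sigma i) = sigma (i + 1))
    (p : ℕ) (hp : 1 ≤ p) :
    tau D p p * (⇑D)^[p] (tau D p p) * tau D p p =
      (⇑D)^[p] (tau D p p) * tau D p p * (⇑D)^[p] (tau D p p) :=
  stmt8_general D hD p
end

section
/- Let G be a group and f an idempotent endomorphism of G (f∘f = f). Then both operations x ∘_f y = f(x·y⁻¹)·x and x ∘_f^rev y = x·f(y⁻¹·x) satisfy the left self-distributivity law. -/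
/-!
Write `x ∘ y = f (x * y⁻¹) * x = f x * (f y)⁻¹ * x`. Idempotence of `f` gives
`f (x ∘ y) = f x * (f y)⁻¹ * f x`, so both sides of the self-distributive law expand to
`f x * (f y)⁻¹ * f z * (f y)⁻¹ * x`. The reversed operation is the same operation computed in
the opposite group `Gᵐᵒᵖ` for the opposite endomorphism, so it is self-distributive as well.
-/

namespace MonoidHom

variable {G : Type*} [Group G]

/-- For `f = id` this is the core operation `x * y⁻¹ * x` of `G`. -/
def coreOp (f : G →* G) (x y : G) : G := f (x * y⁻¹) * x

def coreOpRev (f : G →* G) (x y : G) : G := x * f (y⁻¹ * x)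

theorem coreOp_eq (f : G →* G) (x y : G) : f.coreOp x y = f x * (f y)⁻¹ * x := by
  rw [coreOp, map_mul, map_inv]

theorem map_coreOp {f : G →* G} (hf : ∀ x, f (f x) = f x) (x y : G) :
    f (f.coreOp x y) = f x * (f y)⁻¹ * f x := by
  rw [coreOp_eq, map_mul, map_mul, map_inv, hf, hf]

theorem coreOp_self_distrib {f : G →* G} (hf : ∀ x, f (f x) = f x) (x y z : G) :
    f.coreOp x (f.coreOp y z) = f.coreOp (f.coreOp x y) (f.coreOp x z) := by
  calc f.coreOp x (f.coreOp y z)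
      = f x * (f y * (f z)⁻¹ * f y)⁻¹ * x := by rw [coreOp_eq, map_coreOp hf]
    _ = f x * (f y)⁻¹ * f z * (f y)⁻¹ * x := by group
    _ = (f x * (f y)⁻¹ * f x) * (f x * (f z)⁻¹ * f x)⁻¹ * (f x * (f y)⁻¹ * x) := by group
    _ = f.coreOp (f.coreOp x y) (f.coreOp x z) := by
      rw [coreOp_eq f (f.coreOp x y), map_coreOp hf, map_coreOp hf, coreOp_eq]

theorem op_coreOpRev (f : G →* G) (x y : G) :
    MulOpposite.op (f.coreOpRev x y) = f.op.coreOp (.op x) (.op y) :=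
  rfl

theorem coreOpRev_self_distrib {f : G →* G} (hf : ∀ x, f (f x) = f x) (x y z : G) :
    f.coreOpRev x (f.coreOpRev y z) = f.coreOpRev (f.coreOpRev x y) (f.coreOpRev x z) := by
  have hf_op : ∀ x, f.op (f.op x) = f.op x := fun x => congrArg MulOpposite.op (hf x.unop)
  apply MulOpposite.op_injective
  simp only [op_coreOpRev]
  exact coreOp_self_distrib hf_op _ _ _

end MonoidHom

theorem stmt12 (G : Type*) [Group G] (f : G →* G) (hf : ∀ x : G, f (f x) = f x) :
    (∀ x y z : G,
      (fun x y : G => f (x * y⁻¹) * x) x ((fun x y : G => f (x * y⁻¹) * x) y z) =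
      (fun x y : G => f (x * y⁻¹) * x) ((fun x y : G => f (x * y⁻¹) * x) x y)
        ((fun x y : G => f (x * y⁻¹) * x) x z)) ∧
    (∀ x y z : G,
      (fun x y : G => x * f (y⁻¹ * x)) x ((fun x y : G => x * f (y⁻¹ * x)) y z) =
      (fun x y : G => x * f (y⁻¹ * x)) ((fun x y : G => x * f (y⁻¹ * x)) x y)
        ((fun x y : G => x * f (y⁻¹ * x)) x z)) :=
  ⟨MonoidHom.coreOp_self_distrib hf, MonoidHom.coreOpRev_self_distrib hf⟩
end

section
/- Let G be a group and f an endomorphism of G. Define x *_f y = f(x⁻¹·y)·x and x ∘ y = x·y⁻¹·x. Then *_f distributes over ∘: for all x, y, z ∈ G, x *_f (y ∘ z) = (x *_f y) ∘ (x *_f z). In particular, conjugation x * y = x⁻¹yx distributes over ∘. -/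
/-! Left and right translations and group homomorphisms all preserve the core operation
`x ∘ y = x * y⁻¹ * x`, and `x *_f y = f x⁻¹ * f y * x` is such a composite in `y`.
Conjugation is the case `f = id`. -/

section CoreOperation

variable {G H : Type*} [Group G] [Group H]

theorem mul_mul_inv_mul_left (a b c : G) : a * (b * c⁻¹ * b) = a * b * (a * c)⁻¹ * (a * b) := by
  group

theorem mul_mul_inv_mul_right (a b c : G) : b * c⁻¹ * b * a = b * a * (c * a)⁻¹ * (b * a) := by
  group

theorem map_mul_inv_mul (f : G →* H) (b c : G) : f (b * c⁻¹ * b) = f b * (f c)⁻¹ * f b := by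
  simp only [map_mul, map_inv]

theorem map_inv_mul_mul_mul_inv_mul (f : G →* G) (x y z : G) :
    f (x⁻¹ * (y * z⁻¹ * y)) * x =
      f (x⁻¹ * y) * x * (f (x⁻¹ * z) * x)⁻¹ * (f (x⁻¹ * y) * x) := by
  rw [mul_mul_inv_mul_left, map_mul_inv_mul, mul_mul_inv_mul_right]

end CoreOperation

theorem stmt13 (G : Type*) [Group G] (f : G →* G) :
    (∀ x y z : G,
      (fun x y : G => f (x⁻¹ * y) * x) x ((fun x y : G => x * y⁻¹ * x) y z) =
      (fun x y : G => x * y⁻¹ * x) ((fun x y : G => f (x⁻¹ * y) * x) x y)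
        ((fun x y : G => f (x⁻¹ * y) * x) x z)) ∧
    (∀ x y z : G,
      (fun x y : G => x⁻¹ * y * x) x ((fun x y : G => x * y⁻¹ * x) y z) =
      (fun x y : G => x * y⁻¹ * x) ((fun x y : G => x⁻¹ * y * x) x y)
        ((fun x y : G => x⁻¹ * y * x) x z)) :=
  ⟨map_inv_mul_mul_mul_inv_mul f, map_inv_mul_mul_mul_inv_mul (MonoidHom.id G)⟩
end

section
/- Let G be a group and f an idempotent endomorphism of G. Define x ∘_f y = f(x·y⁻¹)·x and x ∘ y = x·y⁻¹·x. Then ∘_f distributes over ∘: for all x, y, z ∈ G, x ∘_f (y ∘ z) = (x ∘_f y) ∘ (x ∘_f z). -/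
theorem stmt14_general (G : Type*) [Group G] (f : G →* G)
    (x y z : G) :
    (fun x y : G => f (x * y⁻¹) * x) x ((fun x y : G => x * y⁻¹ * x) y z) =
    (fun x y : G => x * y⁻¹ * x) ((fun x y : G => f (x * y⁻¹) * x) x y)
      ((fun x y : G => f (x * y⁻¹) * x) x z) := by
  simp only [map_mul, map_inv, mul_inv_rev, inv_inv]
  group

theorem stmt14 (G : Type*) [Group G] (f : G →* G) (hf : ∀ x : G, f (f x) = f x)
    (x y z : G) :
    (fun x y : G => f (x * y⁻¹) * x) x ((fun x y : G => x * y⁻¹ * x) y z) =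
    (fun x y : G => x * y⁻¹ * x) ((fun x y : G => f (x * y⁻¹) * x) x y)
      ((fun x y : G => f (x * y⁻¹) * x) x z) :=
  stmt14_general G f x y z
end
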